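/- Let z be a leaf of 𝒯, P the set of vertices on the root-to-z path, and w̄ := Σ_{v∈P} |v⟩ ∈ 𝒱. Then: (a) the inner product of Â|v^#⟩ with w̄ is 0 for every v ∈ V_in; (b) for every internal vertex v, every child u ∈ N(v) and the color c of the edge (v, u), the inner product of Â(|v, c⟩ − |u⟩) with w̄ is 0 whenever v ∉ P or u ∈ P; (c) the inner product of |z₀⟩ − |z'⟩ with w̄ equals 1 for every leaf z' ≠ z and 0 for z' = z; (d) letting H ⊆ Ĥ be the span of the vectors |v, black⟩ − |b_v⟩ (v ∈ V_in, b_v the black child of v), |v, red⟩ (v ∈ V_in), |v⟩ (v a non-root vertex with red parent edge), and |v^#⟩ (v ∈ V_in), and A := Â restricted to H, if P contains at most T edges of which at most G are red then ‖A†w̄‖² ≤ W_r·T + (W_b/2 + 2W_r)·G. -/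

import Mathlib

set_option maxHeartbeats 1000000

noncomputable section

namespace TreeSpanProgram

variable {V : Type*} [Fintype V] [DecidableEq V]

/-- The children of a vertex `v` in the rooted tree encoded by `root` and `parent`. -/
def children (root : V) (parent : V → V) (v : V) : Finset V :=
  Finset.univ.filter fun u => u ≠ root ∧ parent u = v

/-- Index of the orthonormal basis of `Ĥ`: a triple `|v, black⟩, |v, red⟩, |v^#⟩` (tags
`0, 1, 2`) for each internal vertex `v`, and a vector `|v⟩` for each vertex `v ∈ V`. -/
abbrev HIdx (VIn : Finset V) := ({v : V // v ∈ VIn} × Fin 3) ⊕ V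

/-- The images under `Â` of the orthonormal basis vectors of `Ĥ`:
`Â|v, black⟩ = √W_b Σ_{u ∈ N(v)} |u⟩`, `Â|v, red⟩ = √W_r Σ_{u ∈ N(v)} |u⟩`,
`Â|v^#⟩ = |v⟩ − Σ_{u ∈ N(v)} |u⟩`, `Â|z₀⟩ = 0` and `Â|v⟩ = √W_{c(v)} |v⟩` for `v ≠ z₀`. -/
def Acol (root : V) (parent : V → V) (color : V → Bool) (VIn : Finset V) (Wb Wr : ℝ) :
    HIdx VIn → EuclideanSpace ℂ V
  | Sum.inl (v, t) =>
      if t = 0 then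
        ((Real.sqrt Wb : ℝ) : ℂ) • ∑ u ∈ children root parent v.1, EuclideanSpace.single u 1
      else if t = 1 then
        ((Real.sqrt Wr : ℝ) : ℂ) • ∑ u ∈ children root parent v.1, EuclideanSpace.single u 1
      else
        EuclideanSpace.single v.1 1 - ∑ u ∈ children root parent v.1, EuclideanSpace.single u 1
  | Sum.inr v =>
      if v = root then 0
      else ((Real.sqrt (if color v then Wb else Wr) : ℝ) : ℂ) • EuclideanSpace.single v 1

/-- The linear map `Â : Ĥ → 𝒱`. -/
def Ahat (root : V) (parent : V → V) (color : V → Bool) (VIn : Finset V) (Wb Wr : ℝ) :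
    EuclideanSpace ℂ (HIdx VIn) →ₗ[ℂ] EuclideanSpace ℂ V :=
  (PiLp.basisFun 2 ℂ (HIdx VIn)).constr ℂ (Acol root parent color VIn Wb Wr)

open scoped InnerProductSpace

/-- Auxiliary: the norm of the adjoint of a restricted map applied to `w`, when the
functional `x ↦ ⟪B x, w⟫` is represented on the submodule by `y`. -/
private theorem aux_adjoint_norm {ι κ : Type*} [Fintype ι] [Fintype κ]
    (Hs : Submodule ℂ (EuclideanSpace ℂ ι)) (B : EuclideanSpace ℂ ι →ₗ[ℂ] EuclideanSpace ℂ κ)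
    (w : EuclideanSpace ℂ κ) (y : EuclideanSpace ℂ ι) (hy : y ∈ Hs)
    (hs : ∀ x ∈ Hs, ⟪B x, w⟫_ℂ = ⟪x, y⟫_ℂ) :
    ‖LinearMap.adjoint (𝕜 := ℂ) (E := Hs) (F := EuclideanSpace ℂ κ)
      (B.comp Hs.subtype) w‖ = ‖y‖ := by
  letI : InnerProductSpace ℂ ↥Hs := Submodule.innerProductSpace Hs
  have key : ∀ q : Hs, (∀ x : Hs, ⟪x, q⟫_ℂ = ⟪(x : EuclideanSpace ℂ ι), y⟫_ℂ) →
      ‖q‖ = ‖y‖ := by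
    intro q hq
    have h0 : ∀ x : Hs, ⟪x, q - ⟨y, hy⟩⟫_ℂ = 0 := by
      intro x
      rw [inner_sub_right, hq x]
      have h2 : ⟪x, (⟨y, hy⟩ : Hs)⟫_ℂ = ⟪(x : EuclideanSpace ℂ ι), y⟫_ℂ := rfl
      rw [h2, sub_self]
    have h3 := h0 (q - ⟨y, hy⟩)
    replace h3 := sub_eq_zero.mp (inner_self_eq_zero.mp h3)
    rw [h3]
    rfl
  apply key
  intro x
  rw [LinearMap.adjoint_inner_right]
  exact hs _ x.2

set_option maxHeartbeats 8000000 in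
/-- Negative witness for the span program built from a (generalized) decision tree: for a leaf
`z` with root-to-`z` path `P` and `w̄ := Σ_{v ∈ P} |v⟩`:
(a) `⟨Â|v^#⟩, w̄⟩ = 0` for every internal `v`;
(b) `⟨Â(|v, c⟩ − |u⟩), w̄⟩ = 0` for every internal `v` and child `u` of `v` with edge color
`c`, whenever `v ∉ P` or `u ∈ P`;
(c) `⟨|z₀⟩ − |z'⟩, w̄⟩ = 1` for every leaf `z' ≠ z`, and `= 0` for `z' = z`;
(d) with `H ⊆ Ĥ` the span of the vectors `|v, black⟩ − |b_v⟩`, `|v, red⟩`, `|v⟩` (for `v`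
with red parent edge) and `|v^#⟩ `, and `A := Â|_H`, one has
`‖A†w̄‖² ≤ W_r·T + (W_b/2 + 2W_r)·G` whenever `P` has at most `T` edges of which at most `G`
are red. -/
theorem tree_negative_witness
    (root : V) (parent : V → V) (color : V → Bool) (depth : V → ℕ)
    (hproot : parent root = root)
    (hdroot : depth root = 0)
    (hdparent : ∀ v, v ≠ root → depth (parent v) + 1 = depth v)
    (hblack : ∀ v, (∃ u, u ≠ root ∧ parent u = v) →
      ∃! u, u ≠ root ∧ parent u = v ∧ color u = true)
    (VIn : Finset V) (hVIn : ∀ v, v ∈ VIn ↔ ∃ u, u ≠ root ∧ parent u = v)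
    (Wb Wr : ℝ) (hWb : 0 < Wb) (hWr : 0 < Wr)
    (z : V) (hz : z ∉ VIn)
    (P : Finset V) (hP : ∀ v, v ∈ P ↔ ∃ k : ℕ, parent^[k] z = v)
    (wbar : EuclideanSpace ℂ V)
    (hwbar : wbar = ∑ v ∈ P, EuclideanSpace.single v 1)
    (Hs : Submodule ℂ (EuclideanSpace ℂ (HIdx VIn)))
    (hHs : Hs = Submodule.span ℂ
      ({x | ∃ (v : {v : V // v ∈ VIn}) (u : V), u ≠ root ∧ parent u = v.1 ∧ color u = true ∧
          x = EuclideanSpace.single (Sum.inl (v, 0)) 1 - EuclideanSpace.single (Sum.inr u) 1} ∪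
        {x | ∃ v : {v : V // v ∈ VIn}, x = EuclideanSpace.single (Sum.inl (v, 1)) 1} ∪
        {x | ∃ u : V, u ≠ root ∧ color u = false ∧
          x = EuclideanSpace.single (Sum.inr u) 1} ∪
        {x | ∃ v : {v : V // v ∈ VIn}, x = EuclideanSpace.single (Sum.inl (v, 2)) 1} :
        Set (EuclideanSpace ℂ (HIdx VIn)))) :
    (∀ v : {v : V // v ∈ VIn},
      ⟪Ahat root parent color VIn Wb Wr (EuclideanSpace.single (Sum.inl (v, 2)) 1),
        wbar⟫_ℂ = 0) ∧
    (∀ (v : {v : V // v ∈ VIn}) (u : V), u ≠ root → parent u = v.1 →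
      (v.1 ∉ P ∨ u ∈ P) →
      ⟪Ahat root parent color VIn Wb Wr
          (EuclideanSpace.single (Sum.inl (v, if color u then 0 else 1)) 1 -
            EuclideanSpace.single (Sum.inr u) 1),
        wbar⟫_ℂ = 0) ∧
    (∀ z' : V, z' ∉ VIn →
      (z' ≠ z →
        ⟪EuclideanSpace.single root 1 - EuclideanSpace.single z' 1, wbar⟫_ℂ = 1) ∧
      (z' = z →
        ⟪EuclideanSpace.single root 1 - EuclideanSpace.single z' 1, wbar⟫_ℂ = 0)) ∧
    (∀ T G : ℝ, (depth z : ℝ) ≤ T →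
      ((P.filter (fun v => v ≠ root ∧ color v = false)).card : ℝ) ≤ G →
      ‖LinearMap.adjoint (𝕜 := ℂ) (E := Hs) (F := EuclideanSpace ℂ V)
          ((Ahat root parent color VIn Wb Wr).comp Hs.subtype) wbar‖ ^ 2 ≤
        Wr * T + (Wb / 2 + 2 * Wr) * G) := by
  classical
  have hdepth0 : ∀ v, depth v = 0 → v = root := by
    intro v hv
    by_contra hne
    have := hdparent v hne
    omega
  have hiter : ∀ n (v : V), depth v ≤ n → parent^[n] v = root := by
    intro n
    induction n with
    | zero => intro v hv; exact hdepth0 v (Nat.le_zero.mp hv)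
    | succ n ih =>
      intro v hv
      by_cases hv0 : v = root
      · rw [hv0, Function.iterate_succ_apply, hproot]
        exact ih root (by omega)
      · rw [Function.iterate_succ_apply]
        apply ih
        have := hdparent v hv0
        omega
  have hzP : z ∈ P := (hP z).2 ⟨0, rfl⟩
  have hrootP : root ∈ P := (hP root).2 ⟨depth z, hiter _ _ le_rfl⟩
  have hparP : ∀ v, v ∈ P → parent v ∈ P := by
    intro v hv
    obtain ⟨k, hk⟩ := (hP v).1 hv
    exact (hP _).2 ⟨k + 1, by rw [Function.iterate_succ_apply', hk]⟩
  have hdepth_iter : ∀ k, parent^[k] z ≠ root → depth (parent^[k] z) + k = depth z := by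
    intro k
    induction k with
    | zero => simp
    | succ k ih =>
      intro hk
      have hkne : parent^[k] z ≠ root := by
        intro h
        rw [Function.iterate_succ_apply', h, hproot] at hk
        exact hk rfl
      have h1 := ih hkne
      have h2 := hdparent (parent^[k] z) hkne
      rw [Function.iterate_succ_apply']
      omega
  have hdepth_inj : ∀ u1 u2, u1 ∈ P → u2 ∈ P → depth u1 = depth u2 → u1 = u2 := by
    intro u1 u2 h1 h2 hd
    by_cases hr1 : u1 = root
    · subst hr1
      exact (hdepth0 u2 (by omega)).symm
    · by_cases hr2 : u2 = root
      · subst hr2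
        exact absurd (hdepth0 u1 (by omega)) hr1
      · obtain ⟨k1, hk1⟩ := (hP u1).1 h1
        obtain ⟨k2, hk2⟩ := (hP u2).1 h2
        have e1 := hdepth_iter k1 (by rw [hk1]; exact hr1)
        have e2 := hdepth_iter k2 (by rw [hk2]; exact hr2)
        rw [hk1] at e1
        rw [hk2] at e2
        have : k1 = k2 := by omega
        rw [← hk1, ← hk2, this]
  have hchild_uniq : ∀ u1 u2, u1 ∈ P → u2 ∈ P → u1 ≠ root → u2 ≠ root →
      parent u1 = parent u2 → u1 = u2 := by
    intro u1 u2 h1 h2 hn1 hn2 hpp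
    have e1 := hdparent u1 hn1
    have e2 := hdparent u2 hn2
    rw [hpp] at e1
    exact hdepth_inj u1 u2 h1 h2 (by omega)
  have hchild_exists : ∀ v, v ∈ P → v ≠ z → ∃ u, u ∈ P ∧ u ≠ root ∧ parent u = v := by
    intro v hv hvz
    have hex : ∃ k, parent^[k] z = v := (hP v).1 hv
    have hk0spec : parent^[Nat.find hex] z = v := Nat.find_spec hex
    have hk0pos : 0 < Nat.find hex := by
      rcases Nat.eq_zero_or_pos (Nat.find hex) with h | h
      · exact absurd (by rw [← hk0spec, h]; rfl) (Ne.symm hvz)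
      · exact h
    refine ⟨parent^[Nat.find hex - 1] z, (hP _).2 ⟨_, rfl⟩, ?_, ?_⟩
    · intro hu
      have hroot' : parent^[Nat.find hex] z = root := by
        conv_lhs => rw [show Nat.find hex = (Nat.find hex - 1) + 1 by omega]
        rw [Function.iterate_succ_apply', hu, hproot]
      have hvroot : v = root := by rw [← hk0spec, hroot']
      exact Nat.find_min hex (show Nat.find hex - 1 < Nat.find hex by omega)
        (by rw [hu, hvroot])
    · conv_rhs => rw [← hk0spec]
      rw [← Function.iterate_succ_apply' parent (Nat.find hex - 1) z]
      congr 1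
      omega
  have hVIn_ne_z : ∀ v, v ∈ VIn → v ≠ z := fun v hv h => hz (h ▸ hv)
  have hPVIn : ∀ v, v ∈ P → v ≠ z → v ∈ VIn := by
    intro v hv hvz
    obtain ⟨u, hu1, hu2, hu3⟩ := hchild_exists v hv hvz
    exact (hVIn v).2 ⟨u, hu2, hu3⟩
  have hcount : ∀ v, v ∈ VIn →
      ((children root parent v).filter (· ∈ P)).card = if v ∈ P then 1 else 0 := by
    intro v hv
    by_cases hvP : v ∈ P
    · rw [if_pos hvP, Finset.card_eq_one]
      obtain ⟨u, huP, hur, hup⟩ := hchild_exists v hvP (hVIn_ne_z v hv)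
      refine ⟨u, ?_⟩
      ext w
      simp only [Finset.mem_filter, Finset.mem_singleton, children, Finset.mem_univ, true_and]
      constructor
      · rintro ⟨⟨hwr, hwp⟩, hwP⟩
        exact hchild_uniq w u hwP huP hwr hur (hwp.trans hup.symm)
      · rintro rfl
        exact ⟨⟨hur, hup⟩, huP⟩
    · rw [if_neg hvP, Finset.card_eq_zero, Finset.filter_eq_empty_iff]
      intro u hu huP
      simp only [children, Finset.mem_filter, Finset.mem_univ, true_and] at hu
      exact hvP (hu.2 ▸ hparP u huP)
  have hwb : ∀ u, wbar u = if u ∈ P then 1 else 0 := by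
    intro u
    rw [hwbar, WithLp.ofLp_sum, Finset.sum_apply]
    simp [EuclideanSpace.single_apply, Finset.sum_ite_eq]

  have hIs : ∀ u : V, ⟪EuclideanSpace.single u (1 : ℂ), wbar⟫_ℂ = if u ∈ P then 1 else 0 := by
    intro u
    rw [EuclideanSpace.inner_single_left, hwb]
    simp
  have hIsum : ∀ v, v ∈ VIn →
      ⟪∑ u ∈ children root parent v, EuclideanSpace.single u (1 : ℂ), wbar⟫_ℂ =
        if v ∈ P then 1 else 0 := by
    intro v hv
    rw [sum_inner, Finset.sum_congr rfl fun u _ => hIs u, Finset.sum_boole, hcount v hv]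
    split <;> norm_num
  have hAs : ∀ i, Ahat root parent color VIn Wb Wr (EuclideanSpace.single i 1) =
      Acol root parent color VIn Wb Wr i := by
    intro i
    rw [show EuclideanSpace.single i (1 : ℂ) = (PiLp.basisFun 2 ℂ (HIdx VIn)) i from
      (PiLp.basisFun_apply _ _ _ _).symm, Ahat, Module.Basis.constr_basis]
  -- part (a) as a general fact
  have parta : ∀ v : {v : V // v ∈ VIn},
      ⟪Ahat root parent color VIn Wb Wr (EuclideanSpace.single (Sum.inl (v, 2)) 1),
        wbar⟫_ℂ = 0 := by
    intro v
    rw [hAs]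
    show ⟪EuclideanSpace.single v.1 1 - ∑ u ∈ children root parent v.1,
        EuclideanSpace.single u 1, wbar⟫_ℂ = 0
    rw [inner_sub_left, hIs, hIsum v.1 v.2, sub_self]
  -- part (b) as a general fact (no side condition version for generators)
  have partb0 : ∀ (v : {v : V // v ∈ VIn}) (u : V), u ≠ root → parent u = v.1 →
      ⟪Ahat root parent color VIn Wb Wr
          (EuclideanSpace.single (Sum.inl (v, if color u then 0 else 1)) 1 -
            EuclideanSpace.single (Sum.inr u) 1), wbar⟫_ℂ =
        ((Real.sqrt (if color u then Wb else Wr) : ℝ) : ℂ) *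
          ((if v.1 ∈ P then 1 else 0) - (if u ∈ P then 1 else 0)) := by
    intro v u hur hup
    rw [map_sub, inner_sub_left, hAs, hAs]
    have hr : Acol root parent color VIn Wb Wr (Sum.inr u) =
        ((Real.sqrt (if color u then Wb else Wr) : ℝ) : ℂ) • EuclideanSpace.single u 1 := by
      show (if u = root then _ else _) = _
      rw [if_neg hur]
    rw [hr, inner_smul_left]
    by_cases hcu : color u
    · rw [if_pos hcu]
      show ⟪((Real.sqrt Wb : ℝ) : ℂ) • ∑ u ∈ children root parent v.1,
          EuclideanSpace.single u 1, wbar⟫_ℂ - _ = _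
      rw [inner_smul_left, hIsum v.1 v.2, hIs, if_pos hcu]
      rw [Complex.conj_ofReal]
      ring
    · rw [if_neg hcu]
      show ⟪((Real.sqrt Wr : ℝ) : ℂ) • ∑ u ∈ children root parent v.1,
          EuclideanSpace.single u 1, wbar⟫_ℂ - _ = _
      rw [inner_smul_left, hIsum v.1 v.2, hIs, if_neg hcu]
      rw [Complex.conj_ofReal]
      ring
  refine ⟨parta, ?_, ?_, ?_⟩
  · -- part (b)
    intro v u hur hup hc
    rw [partb0 v u hur hup]
    have key : (if v.1 ∈ P then (1 : ℂ) else 0) = if u ∈ P then 1 else 0 := by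
      rcases hc with h | h
      · rw [if_neg h, if_neg fun huP => h (hup ▸ hparP u huP)]
      · rw [if_pos h, if_pos (hup ▸ hparP u h)]
    rw [key, sub_self, mul_zero]
  · -- part (c)
    intro z' hz'
    constructor
    · intro hne
      rw [inner_sub_left, hIs, hIs, if_pos hrootP,
        if_neg fun h => hz' (hPVIn z' h hne)]
      ring
    · intro he
      subst he
      rw [inner_sub_left, hIs, hIs, if_pos hrootP, if_pos hzP, sub_self]
  · -- part (d)
    intro T G hT hG
    -- black child selector
    have hbcx0 : ∀ w, w ∈ VIn → ∃ u, u ≠ root ∧ parent u = w ∧ color u = true :=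
      fun w hw => (hblack w ((hVIn w).1 hw)).exists
    set bcx : V → V := fun w => if h : w ∈ VIn then (hbcx0 w h).choose else w with hbcxdef
    have hbcx : ∀ w, w ∈ VIn → bcx w ≠ root ∧ parent (bcx w) = w ∧ color (bcx w) = true := by
      intro w hw
      simp only [hbcxdef, dif_pos hw]
      exact (hbcx0 w hw).choose_spec
    have hbcx_uniq : ∀ w, w ∈ VIn → ∀ u, u ≠ root → parent u = w → color u = true →
        u = bcx w := by
      intro w hw u h1 h2 h3
      exact (hblack w ((hVIn w).1 hw)).unique ⟨h1, h2, h3⟩ (hbcx w hw)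
    set χ : V → ℝ := fun u => if u ∈ P then 1 else 0 with hχdef
    set a : V → ℝ := fun w => Real.sqrt Wb * (χ w - χ (bcx w)) / 2 with hadef
    set Y : HIdx VIn → ℂ := fun i =>
      match i with
      | Sum.inl (v, t) =>
          if t = 0 then ((a v.1 : ℝ) : ℂ)
          else if t = 1 then ((Real.sqrt Wr * χ v.1 : ℝ) : ℂ) else 0
      | Sum.inr u =>
          if u ≠ root ∧ color u = true then -((a (parent u) : ℝ) : ℂ)
          else if u ≠ root ∧ color u = false ∧ u ∈ P then ((Real.sqrt Wr : ℝ) : ℂ) else 0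
      with hYdef
    set y1 : EuclideanSpace ℂ (HIdx VIn) :=
      ∑ v : {v : V // v ∈ VIn}, ((a v.1 : ℝ) : ℂ) •
        (EuclideanSpace.single (Sum.inl (v, 0)) 1 -
          EuclideanSpace.single (Sum.inr (bcx v.1)) 1) with hy1
    set y2 : EuclideanSpace ℂ (HIdx VIn) :=
      ∑ v : {v : V // v ∈ VIn}, ((Real.sqrt Wr * χ v.1 : ℝ) : ℂ) •
        EuclideanSpace.single (Sum.inl (v, 1)) 1 with hy2
    set y3 : EuclideanSpace ℂ (HIdx VIn) :=
      ∑ u : V, (if u ≠ root ∧ color u = false ∧ u ∈ P then ((Real.sqrt Wr : ℝ) : ℂ) else 0) •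
        EuclideanSpace.single (Sum.inr u) 1 with hy3
    set y' : EuclideanSpace ℂ (HIdx VIn) := y1 + y2 + y3 with hy'def
    -- coordinates
    have hA1 : ∀ (w : {v : V // v ∈ VIn}) (t : Fin 3),
        y1 (Sum.inl (w, t)) = if t = 0 then ((a w.1 : ℝ) : ℂ) else 0 := by
      intro w t
      rw [hy1, WithLp.ofLp_sum, Finset.sum_apply]
      simp only [PiLp.smul_apply, PiLp.sub_apply, EuclideanSpace.single_apply, smul_eq_mul,
        Sum.inl.injEq, Prod.mk.injEq, reduceCtorEq, if_false, sub_zero, mul_ite, mul_one,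
        mul_zero]
      by_cases ht : t = 0
      · subst ht
        simp [Finset.sum_ite_eq]
      · simp [ht]
    have hA2 : ∀ (w : {v : V // v ∈ VIn}) (t : Fin 3),
        y2 (Sum.inl (w, t)) = if t = 1 then ((Real.sqrt Wr * χ w.1 : ℝ) : ℂ) else 0 := by
      intro w t
      rw [hy2, WithLp.ofLp_sum, Finset.sum_apply]
      simp only [PiLp.smul_apply, EuclideanSpace.single_apply, smul_eq_mul,
        Sum.inl.injEq, Prod.mk.injEq, mul_ite, mul_one, mul_zero]
      by_cases ht : t = 1
      · subst ht
        simp [Finset.sum_ite_eq]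
      · simp [ht]
    have hA3 : ∀ (w : {v : V // v ∈ VIn}) (t : Fin 3), y3 (Sum.inl (w, t)) = 0 := by
      intro w t
      rw [hy3, WithLp.ofLp_sum, Finset.sum_apply]
      apply Finset.sum_eq_zero
      intro u _
      split_ifs <;> simp [EuclideanSpace.single_apply]
    have hB2 : ∀ u : V, y2 (Sum.inr u) = 0 := by
      intro u
      rw [hy2, WithLp.ofLp_sum, Finset.sum_apply]
      apply Finset.sum_eq_zero
      intro v _
      simp [EuclideanSpace.single_apply]
    have hB3 : ∀ u : V, y3 (Sum.inr u) =
        if u ≠ root ∧ color u = false ∧ u ∈ P then ((Real.sqrt Wr : ℝ) : ℂ) else 0 := by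
      intro u
      rw [hy3, WithLp.ofLp_sum, Finset.sum_apply]
      have step : ∀ u' : V,
          (((if u' ≠ root ∧ color u' = false ∧ u' ∈ P then ((Real.sqrt Wr : ℝ) : ℂ) else 0) •
            EuclideanSpace.single (Sum.inr u') (1 : ℂ) :
              EuclideanSpace ℂ (HIdx VIn)) : HIdx VIn → ℂ) (Sum.inr u) =
          if u = u' then
            (if u' ≠ root ∧ color u' = false ∧ u' ∈ P then ((Real.sqrt Wr : ℝ) : ℂ) else 0)
          else 0 := by
        intro u'
        by_cases h : u = u'
        · subst h
          rw [if_pos rfl]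
          split_ifs <;> simp [PiLp.smul_apply, EuclideanSpace.single_apply]
        · split_ifs <;> simp [PiLp.smul_apply, EuclideanSpace.single_apply, h]
      rw [Finset.sum_congr rfl fun u' _ => step u']
      rw [Finset.sum_ite_eq, if_pos (Finset.mem_univ u)]
    have hB1 : ∀ u : V, y1 (Sum.inr u) =
        if u ≠ root ∧ color u = true then -((a (parent u) : ℝ) : ℂ) else 0 := by
      intro u
      rw [hy1, WithLp.ofLp_sum, Finset.sum_apply]
      have step : ∀ v : {v : V // v ∈ VIn},
          ((((a v.1 : ℝ) : ℂ) • (EuclideanSpace.single (Sum.inl (v, (0 : Fin 3))) (1 : ℂ) -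
            EuclideanSpace.single (Sum.inr (bcx v.1)) 1) :
              EuclideanSpace ℂ (HIdx VIn)) : HIdx VIn → ℂ) (Sum.inr u) =
          if u = bcx v.1 then -((a v.1 : ℝ) : ℂ) else 0 := by
        intro v
        by_cases h : u = bcx v.1
        · subst h
          simp [PiLp.smul_apply, PiLp.sub_apply, EuclideanSpace.single_apply]
        · simp [PiLp.smul_apply, PiLp.sub_apply, EuclideanSpace.single_apply, h]
      rw [Finset.sum_congr rfl fun v _ => step v]
      by_cases hu : u ≠ root ∧ color u = true
      · have hmem : parent u ∈ VIn := (hVIn (parent u)).2 ⟨u, hu.1, rfl⟩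
        have hbu : bcx (parent u) = u := (hbcx_uniq (parent u) hmem u hu.1 rfl hu.2).symm
        rw [Finset.sum_eq_single (⟨parent u, hmem⟩ : {v : V // v ∈ VIn}) ?g1 ?g2]
        · rw [if_pos hbu.symm, if_pos hu]
        case g1 =>
          intro v _ hv
          rw [if_neg ?_]
          intro h
          apply hv
          have hpv : parent u = v.1 := by rw [h, (hbcx v.1 v.2).2.1]
          exact Subtype.ext hpv.symm
        case g2 =>
          intro h
          exact absurd (Finset.mem_univ _) h
      · rw [if_neg hu]
        apply Finset.sum_eq_zero
        intro v _
        rw [if_neg ?_]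
        intro h
        apply hu
        refine ⟨?_, ?_⟩
        · rw [h]; exact (hbcx v.1 v.2).1
        · rw [h]; exact (hbcx v.1 v.2).2.2
    have hcoord : ∀ i, y' i = Y i := by
      intro i
      have happ : y' i = y1 i + y2 i + y3 i := rfl
      rcases i with ⟨w, t⟩ | u
      · rw [happ, hA1, hA2, hA3, hYdef]
        fin_cases t <;> simp
      · rw [happ, hB1, hB2, hB3, hYdef]
        by_cases hu : u ≠ root ∧ color u = true
        · have : ¬(u ≠ root ∧ color u = false ∧ u ∈ P) := by
            rintro ⟨_, h2, _⟩
            rw [hu.2] at h2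
            exact absurd h2 (by simp)
          rw [if_pos hu, if_neg this]
          simp [hu]
        · rw [if_neg hu]
          simp only [hu, if_false]
          ring
    -- value lemmas for Y
    have hYv0 : ∀ v : {v : V // v ∈ VIn}, Y (Sum.inl (v, 0)) = ((a v.1 : ℝ) : ℂ) :=
      fun v => rfl
    have hYv1 : ∀ v : {v : V // v ∈ VIn},
        Y (Sum.inl (v, 1)) = ((Real.sqrt Wr * χ v.1 : ℝ) : ℂ) := fun v => rfl
    have hYv2 : ∀ v : {v : V // v ∈ VIn}, Y (Sum.inl (v, 2)) = 0 := fun v => rfl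
    have hYu : ∀ u : V, Y (Sum.inr u) =
        if u ≠ root ∧ color u = true then -((a (parent u) : ℝ) : ℂ)
        else if u ≠ root ∧ color u = false ∧ u ∈ P then ((Real.sqrt Wr : ℝ) : ℂ) else 0 :=
      fun u => rfl
    have hχc : ∀ w : V, ((χ w : ℝ) : ℂ) = if w ∈ P then 1 else 0 := by
      intro w
      rw [hχdef]
      dsimp only
      split_ifs <;> simp
    -- membership of y' in the span
    have hy'mem : y' ∈ Submodule.span ℂ
        ({x | ∃ (v : {v : V // v ∈ VIn}) (u : V), u ≠ root ∧ parent u = v.1 ∧ color u = true ∧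
            x = EuclideanSpace.single (Sum.inl (v, 0)) 1 - EuclideanSpace.single (Sum.inr u) 1} ∪
          {x | ∃ v : {v : V // v ∈ VIn}, x = EuclideanSpace.single (Sum.inl (v, 1)) 1} ∪
          {x | ∃ u : V, u ≠ root ∧ color u = false ∧
            x = EuclideanSpace.single (Sum.inr u) 1} ∪
          {x | ∃ v : {v : V // v ∈ VIn}, x = EuclideanSpace.single (Sum.inl (v, 2)) 1} :
          Set (EuclideanSpace ℂ (HIdx VIn))) := by
      rw [hy'def]
      refine Submodule.add_mem _ (Submodule.add_mem _ ?_ ?_) ?_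
      · refine Submodule.sum_mem _ fun v _ => Submodule.smul_mem _ _ (Submodule.subset_span ?_)
        exact Or.inl (Or.inl (Or.inl ⟨v, bcx v.1, (hbcx v.1 v.2).1, (hbcx v.1 v.2).2.1,
          (hbcx v.1 v.2).2.2, rfl⟩))
      · refine Submodule.sum_mem _ fun v _ => Submodule.smul_mem _ _ (Submodule.subset_span ?_)
        exact Or.inl (Or.inl (Or.inr ⟨v, rfl⟩))
      · refine Submodule.sum_mem _ fun u _ => ?_
        by_cases hc : u ≠ root ∧ color u = false ∧ u ∈ P
        · rw [if_pos hc]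
          exact Submodule.smul_mem _ _ (Submodule.subset_span
            (Or.inl (Or.inr ⟨u, hc.1, hc.2.1, rfl⟩)))
        · rw [if_neg hc, zero_smul]
          exact Submodule.zero_mem _
    -- generator identities
    have hgen : ∀ x ∈
        ({x | ∃ (v : {v : V // v ∈ VIn}) (u : V), u ≠ root ∧ parent u = v.1 ∧ color u = true ∧
            x = EuclideanSpace.single (Sum.inl (v, 0)) 1 - EuclideanSpace.single (Sum.inr u) 1} ∪
          {x | ∃ v : {v : V // v ∈ VIn}, x = EuclideanSpace.single (Sum.inl (v, 1)) 1} ∪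
          {x | ∃ u : V, u ≠ root ∧ color u = false ∧
            x = EuclideanSpace.single (Sum.inr u) 1} ∪
          {x | ∃ v : {v : V // v ∈ VIn}, x = EuclideanSpace.single (Sum.inl (v, 2)) 1} :
          Set (EuclideanSpace ℂ (HIdx VIn))),
        ⟪Ahat root parent color VIn Wb Wr x, wbar⟫_ℂ = ⟪x, y'⟫_ℂ := by
      rintro x (((⟨v, u, hu1, hu2, hu3, rfl⟩ | ⟨v, rfl⟩) | ⟨u, hu1, hu2, rfl⟩) | ⟨v, rfl⟩)
      · -- type 1: black pair
        have hbu : bcx v.1 = u := (hbcx_uniq v.1 v.2 u hu1 hu2 hu3).symm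
        have hL := partb0 v u hu1 hu2
        rw [hu3] at hL
        simp only [eq_self_iff_true, if_true] at hL
        rw [hL, inner_sub_left, EuclideanSpace.inner_single_left,
          EuclideanSpace.inner_single_left, map_one, one_mul, one_mul, hcoord, hcoord,
          hYv0, hYu, hu2, if_pos (show u ≠ root ∧ color u = true from ⟨hu1, hu3⟩),
          sub_neg_eq_add]
        rw [hadef, hχdef]
        dsimp only
        rw [hbu]
        split_ifs <;> push_cast <;> ring
      · -- type 2: red basis vector at internal vertex
        rw [hAs]
        have hAc : Acol root parent color VIn Wb Wr (Sum.inl (v, 1)) =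
            ((Real.sqrt Wr : ℝ) : ℂ) •
              ∑ u ∈ children root parent v.1, EuclideanSpace.single u 1 := rfl
        rw [hAc, inner_smul_left, hIsum v.1 v.2, Complex.conj_ofReal,
          EuclideanSpace.inner_single_left, map_one, one_mul, hcoord, hYv1, ← hχc]
        push_cast
        ring
      · -- type 3: red nonroot vertex
        rw [hAs]
        have hAc : Acol root parent color VIn Wb Wr (Sum.inr u) =
            ((Real.sqrt (if color u then Wb else Wr) : ℝ) : ℂ) •
              EuclideanSpace.single u 1 := by
          show (if u = root then _ else _) = _
          rw [if_neg hu1]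
        rw [hAc, inner_smul_left, hIs u, Complex.conj_ofReal,
          EuclideanSpace.inner_single_left, map_one, one_mul, hcoord, hYu]
        by_cases hp : u ∈ P <;> simp [hu1, hu2, hp]
      · -- type 4
        rw [EuclideanSpace.inner_single_left, map_one, one_mul, hcoord, hYv2]
        exact parta v
    -- the span property
    have hspan : ∀ x ∈ Hs,
        ⟪Ahat root parent color VIn Wb Wr x, wbar⟫_ℂ = ⟪x, y'⟫_ℂ := by
      intro x hx
      rw [hHs] at hx
      induction hx using Submodule.span_induction with
      | mem x h => exact hgen x h
      | zero => simp
      | add x y hx hy ihx ihy => rw [map_add, inner_add_left, inner_add_left, ihx, ihy]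
      | smul c x hx ih => rw [map_smul, inner_smul_left, inner_smul_left, ih]
    have hy'Hs : y' ∈ Hs := by rw [hHs]; exact hy'mem
    rw [aux_adjoint_norm Hs (Ahat root parent color VIn Wb Wr) wbar y' hy'Hs hspan]
    -- norm computation
    have hχsq : ∀ w : V, (χ w) ^ 2 = χ w := by
      intro w
      rw [hχdef]
      dsimp only
      split_ifs <;> norm_num
    have hnormsq : ‖y'‖ ^ 2 = ∑ i, ‖Y i‖ ^ 2 := by
      rw [EuclideanSpace.norm_eq, Real.sq_sqrt (by positivity)]
      exact Finset.sum_congr rfl fun i _ => by rw [hcoord i]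
    rw [hnormsq, Fintype.sum_sum_type, Fintype.sum_prod_type]
    have hsum_t : ∀ v : {v : V // v ∈ VIn},
        ∑ t : Fin 3, ‖Y (Sum.inl (v, t))‖ ^ 2 = (a v.1) ^ 2 + Wr * χ v.1 := by
      intro v
      rw [Fin.sum_univ_three, hYv0, hYv1, hYv2, Complex.norm_real, Complex.norm_real,
        norm_zero, Real.norm_eq_abs, Real.norm_eq_abs, sq_abs, sq_abs, mul_pow,
        Real.sq_sqrt hWr.le, hχsq]
      ring
    rw [Finset.sum_congr rfl fun v _ => hsum_t v]
    have hYnorm : ∀ u : V, ‖Y (Sum.inr u)‖ ^ 2 =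
        (if u ≠ root ∧ color u = true then (a (parent u)) ^ 2 else 0) +
        (if u ≠ root ∧ color u = false ∧ u ∈ P then Wr else 0) := by
      intro u
      rw [hYu]
      by_cases h1 : u ≠ root ∧ color u = true
      · rw [if_pos h1, if_pos h1,
          if_neg (fun h => by rw [h1.2] at h; exact absurd h.2.1 (by simp)),
          norm_neg, Complex.norm_real, Real.norm_eq_abs, sq_abs, add_zero]
      · rw [if_neg h1, if_neg h1, zero_add]
        by_cases h2 : u ≠ root ∧ color u = false ∧ u ∈ P
        · rw [if_pos h2, if_pos h2, Complex.norm_real, Real.norm_eq_abs, sq_abs,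
            Real.sq_sqrt hWr.le]
        · rw [if_neg h2, if_neg h2, norm_zero]
          norm_num
    rw [Finset.sum_congr rfl fun u _ => hYnorm u, Finset.sum_add_distrib,
      Finset.sum_add_distrib]
    have hsubsum : ∀ f : V → ℝ, ∑ v : {v : V // v ∈ VIn}, f v.1 = ∑ w ∈ VIn, f w :=
      fun f => Finset.sum_coe_sort VIn f
    rw [hsubsum fun w => (a w) ^ 2, hsubsum fun w => Wr * χ w]
    -- bound 1 : sum of a² over VIn
    have hind : ∀ w ∈ VIn, (a w) ^ 2 = Wb / 4 * (if w ∈ P ∧ bcx w ∉ P then 1 else 0) := by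
      intro w hw
      rw [hadef]
      dsimp only
      by_cases hwP : w ∈ P
      · by_cases hbP : bcx w ∈ P
        · rw [if_neg (fun h => h.2 hbP), hχdef]
          dsimp only
          rw [if_pos hwP, if_pos hbP]
          norm_num
        · rw [if_pos ⟨hwP, hbP⟩, hχdef]
          dsimp only
          rw [if_pos hwP, if_neg hbP]
          have h := Real.sq_sqrt hWb.le
          nlinarith [h]
      · have hbP : bcx w ∉ P := fun h => hwP (by
          rw [← (hbcx w hw).2.1]
          exact hparP _ h)
        rw [if_neg (fun h => hwP h.1), hχdef]
        dsimp only
        rw [if_neg hwP, if_neg hbP]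
        norm_num
    have hcard1 : (VIn.filter fun w => w ∈ P ∧ bcx w ∉ P).card ≤
        (P.filter fun v => v ≠ root ∧ color v = false).card := by
      apply Finset.card_le_card_of_injOn
        (fun w => if h : w ∈ P ∧ w ≠ z then (hchild_exists w h.1 h.2).choose else w)
      · intro w hw
        simp only [Finset.mem_coe, Finset.mem_filter] at hw
        obtain ⟨hwV, hwP, hbP⟩ := hw
        have hwz : w ≠ z := hVIn_ne_z w hwV
        simp only [dif_pos (And.intro hwP hwz)]
        obtain ⟨h1, h2, h3⟩ := (hchild_exists w hwP hwz).choose_spec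
        simp only [Finset.mem_coe, Finset.mem_filter]
        refine ⟨h1, h2, ?_⟩
        cases hcu : color ((hchild_exists w hwP hwz).choose) with
        | false => rfl
        | true => exact absurd ((hbcx_uniq w hwV _ h2 h3 hcu) ▸ h1) hbP
      · intro w1 h1 w2 h2 he
        simp only [Finset.coe_filter, Set.mem_setOf_eq] at h1 h2
        have hz1 : w1 ≠ z := hVIn_ne_z _ h1.1
        have hz2 : w2 ≠ z := hVIn_ne_z _ h2.1
        simp only [dif_pos (And.intro h1.2.1 hz1), dif_pos (And.intro h2.2.1 hz2)] at he
        have s1 := (hchild_exists w1 h1.2.1 hz1).choose_spec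
        have s2 := (hchild_exists w2 h2.2.1 hz2).choose_spec
        rw [← s1.2.2, ← s2.2.2, he]
    have hbound1 : ∑ w ∈ VIn, (a w) ^ 2 ≤
        Wb / 4 * ((P.filter fun v => v ≠ root ∧ color v = false).card : ℝ) := by
      rw [Finset.sum_congr rfl hind, ← Finset.mul_sum, Finset.sum_boole]
      have hc : ((VIn.filter fun w => w ∈ P ∧ bcx w ∉ P).card : ℝ) ≤
          ((P.filter fun v => v ≠ root ∧ color v = false).card : ℝ) :=
        Nat.cast_le.mpr hcard1
      exact mul_le_mul_of_nonneg_left hc (by positivity)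
    -- bound 2 : sum of Wr * χ over VIn
    have hPsub : P ⊆ (Finset.range (depth z + 1)).image fun k => parent^[k] z := by
      intro v hv
      obtain ⟨k, hk⟩ := (hP v).1 hv
      by_cases hkd : k ≤ depth z
      · exact Finset.mem_image.2 ⟨k, Finset.mem_range.2 (by omega), hk⟩
      · have hkr : parent^[k] z = root := hiter k z (by omega)
        exact Finset.mem_image.2 ⟨depth z, Finset.mem_range.2 (by omega),
          by rw [hiter (depth z) z le_rfl, ← hk, hkr]⟩
    have hPcard : P.card ≤ depth z + 1 := by
      calc P.card ≤ ((Finset.range (depth z + 1)).image fun k => parent^[k] z).card :=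
            Finset.card_le_card hPsub
        _ ≤ (Finset.range (depth z + 1)).card := Finset.card_image_le
        _ = depth z + 1 := Finset.card_range _
    have hcard2 : (VIn.filter fun w => w ∈ P).card ≤ depth z := by
      have hsub2 : VIn.filter (fun w => w ∈ P) ⊆ P.erase z := by
        intro w hw
        simp only [Finset.mem_filter] at hw
        exact Finset.mem_erase.2 ⟨hVIn_ne_z w hw.1, hw.2⟩
      have hle := Finset.card_le_card hsub2
      rw [Finset.card_erase_of_mem hzP] at hle
      omega
    have hbound2 : ∑ w ∈ VIn, Wr * χ w ≤ Wr * T := by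
      rw [← Finset.mul_sum]
      have hs : ∑ w ∈ VIn, χ w = ((VIn.filter fun w => w ∈ P).card : ℝ) := by
        simp only [hχdef]
        rw [Finset.sum_ite, Finset.sum_const, Finset.sum_const_zero, add_zero,
          nsmul_eq_mul, mul_one]
      rw [hs]
      have hdz : ((VIn.filter fun w => w ∈ P).card : ℝ) ≤ T :=
        le_trans (by exact_mod_cast hcard2) hT
      exact mul_le_mul_of_nonneg_left hdz hWr.le
    -- bound 3 : black column part
    have hbound3 : (∑ u : V, if u ≠ root ∧ color u = true then (a (parent u)) ^ 2 else 0)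
        ≤ ∑ w ∈ VIn, (a w) ^ 2 := by
      rw [← Finset.sum_filter]
      have himg : ∑ u ∈ Finset.univ.filter (fun u : V => u ≠ root ∧ color u = true),
          (a (parent u)) ^ 2
          = ∑ w ∈ (Finset.univ.filter (fun u : V => u ≠ root ∧ color u = true)).image parent,
              (a w) ^ 2 := by
        rw [Finset.sum_image ?_]
        intro u1 hu1 u2 hu2 he
        simp only [Finset.mem_coe, Finset.mem_filter, Finset.mem_univ, true_and] at hu1 hu2
        exact (hblack (parent u1) ⟨u1, hu1.1, rfl⟩).unique ⟨hu1.1, rfl, hu1.2⟩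
          ⟨hu2.1, he.symm, hu2.2⟩
      rw [himg]
      apply Finset.sum_le_sum_of_subset_of_nonneg
      · intro w hw
        simp only [Finset.mem_image, Finset.mem_filter, Finset.mem_univ, true_and] at hw
        obtain ⟨u, ⟨hu1, _⟩, rfl⟩ := hw
        exact (hVIn _).2 ⟨u, hu1, rfl⟩
      · intro w _ _
        positivity
    -- bound 4 : red column part
    have hbound4 : (∑ u : V, if u ≠ root ∧ color u = false ∧ u ∈ P then Wr else 0) =
        Wr * ((P.filter fun v => v ≠ root ∧ color v = false).card : ℝ) := by
      rw [Finset.sum_ite, Finset.sum_const, Finset.sum_const_zero, add_zero, nsmul_eq_mul]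
      have hcg : (Finset.univ.filter fun u : V => u ≠ root ∧ color u = false ∧ u ∈ P) =
          P.filter fun v => v ≠ root ∧ color v = false := by
        ext u
        simp only [Finset.mem_filter, Finset.mem_univ, true_and]
        tauto
      rw [hcg]
      ring
    -- final arithmetic
    have hG0 : (0 : ℝ) ≤ ((P.filter fun v => v ≠ root ∧ color v = false).card : ℝ) :=
      Nat.cast_nonneg _
    have hWbG : Wb / 4 * ((P.filter fun v => v ≠ root ∧ color v = false).card : ℝ) ≤
        Wb / 4 * G := mul_le_mul_of_nonneg_left hG (by positivity)
    have hWrG : Wr * ((P.filter fun v => v ≠ root ∧ color v = false).card : ℝ) ≤ Wr * G :=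
      mul_le_mul_of_nonneg_left hG hWr.le
    have hWrGpos : 0 ≤ Wr * G := mul_nonneg hWr.le (le_trans hG0 hG)
    linarith [hbound1, hbound2, hbound3, hbound4, hWbG, hWrG, hWrGpos]



end TreeSpanProgram

end
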